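/- For a nonnegative vector x feasible for the Sudoku system, the ℓ₀ norm satisfies ‖x‖₀ ≥ 81 with equality iff x is binary; hence the ℓ₀ minimization problem over nonnegative feasible vectors has optimal value 81 whenever the puzzle is solvable, and its optimizers are exactly the encodings of valid Sudoku solutions. -/
import Mathlib


/-- Grid coordinate of offset `s` inside box row/column `p`. -/
def boxIdx (p s : Fin 3) : Fin 9 :=
  ⟨3 * p.val + s.val, by have := p.isLt; have := s.isLt; omega⟩

/-- A vector indexed by cell `(i,j)` and digit `k` is binary (0/1-valued). -/
def Binary (x : Fin 9 → Fin 9 → Fin 9 → ℝ) : Prop :=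
  ∀ i j k, x i j k = 0 ∨ x i j k = 1

/-- The full Sudoku linear system `Ax = b`: row, column, box, cell and clue
constraints, all right-hand sides equal to 1. -/
def SudokuSat (clues : Fin 9 → Fin 9 → Fin 9 → Prop)
    (x : Fin 9 → Fin 9 → Fin 9 → ℝ) : Prop :=
  (∀ i k, ∑ j, x i j k = 1) ∧
  (∀ j k, ∑ i, x i j k = 1) ∧
  (∀ p q k, ∑ s : Fin 3, ∑ t : Fin 3, x (boxIdx p s) (boxIdx q t) k = 1) ∧
  (∀ i j, ∑ k, x i j k = 1) ∧
  (∀ i j d, clues i j d → x i j d = 1)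

/-- A valid Sudoku solution: every row, column and 3×3 box contains each digit
exactly once. -/
def ValidSolution (S : Fin 9 → Fin 9 → Fin 9) : Prop :=
  (∀ i, Function.Bijective (S i)) ∧
  (∀ j, Function.Bijective (fun i => S i j)) ∧
  (∀ p q, Function.Injective
    (fun st : Fin 3 × Fin 3 => S (boxIdx p st.1) (boxIdx q st.2)))

/-- The solution `S` agrees with the given clues. -/
def Respects (clues : Fin 9 → Fin 9 → Fin 9 → Prop)
    (S : Fin 9 → Fin 9 → Fin 9) : Prop :=
  ∀ i j d, clues i j d → S i j = d

/-- Binary encoding of a Sudoku grid: `x i j k = 1` iff `S i j = k`. -/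
def enc (S : Fin 9 → Fin 9 → Fin 9) : Fin 9 → Fin 9 → Fin 9 → ℝ :=
  fun i j k => if S i j = k then 1 else 0

/-- `‖x‖₀`: the number of nonzero coordinates of `x`. -/
noncomputable def card0 (x : Fin 9 → Fin 9 → Fin 9 → ℝ) : ℕ :=
  (Finset.univ.filter
    (fun c : Fin 9 × Fin 9 × Fin 9 => x c.1 c.2.1 c.2.2 ≠ 0)).card

open Finset

lemma sum_eq_one_unique {α : Type*} [Fintype α] [DecidableEq α]
    (f : α → ℝ) (h0 : ∀ k, 0 ≤ f k) (h1 : ∑ k, f k = 1)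
    {a b : α} (ha : f a = 1) (hb : f b = 1) : a = b := by
  by_contra hne
  have h2 : ∑ k ∈ ({a, b} : Finset α), f k ≤ ∑ k, f k :=
    Finset.sum_le_sum_of_subset_of_nonneg (subset_univ _) (fun k _ _ => h0 k)
  rw [Finset.sum_pair hne, ha, hb, h1] at h2
  linarith

lemma cell_one_le (f : Fin 9 → ℝ) (h1 : ∑ k, f k = 1) :
    1 ≤ (univ.filter (fun k => f k ≠ 0)).card := by
  rcases Finset.eq_empty_or_nonempty (univ.filter (fun k => f k ≠ 0)) with h | h
  · exfalso
    have hz : ∀ k : Fin 9, f k = 0 := by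
      intro k
      by_contra hk
      have : k ∈ univ.filter (fun k => f k ≠ 0) := by simp [hk]
      simp [h] at this
    simp [hz] at h1
  · exact Finset.card_pos.mpr h

lemma cell_card_one (f : Fin 9 → ℝ) (h1 : ∑ k, f k = 1)
    (hc : (univ.filter (fun k => f k ≠ 0)).card = 1) :
    ∃ k, f k = 1 ∧ ∀ k', k' ≠ k → f k' = 0 := by
  obtain ⟨k, hk⟩ := Finset.card_eq_one.mp hc
  have hz : ∀ k', k' ≠ k → f k' = 0 := by
    intro k' hk'
    by_contra h
    have hmem : k' ∈ univ.filter (fun k => f k ≠ 0) := by simp [h]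
    rw [hk] at hmem
    simp at hmem
    exact hk' hmem
  refine ⟨k, ?_, hz⟩
  have hs : ∑ x, f x = f k :=
    Finset.sum_eq_single k (fun b _ hb => hz b hb) (by simp)
  rw [hs] at h1
  exact h1

lemma cell_binary_card (f : Fin 9 → ℝ) (h1 : ∑ k, f k = 1)
    (hb : ∀ k, f k = 0 ∨ f k = 1) :
    (univ.filter (fun k => f k ≠ 0)).card = 1 := by
  have hs : ∑ k ∈ univ.filter (fun k => f k ≠ 0), f k = 1 := by
    rw [Finset.sum_filter_ne_zero]; exact h1
  have hcard : ∑ k ∈ univ.filter (fun k => f k ≠ 0), f k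
      = ((univ.filter (fun k => f k ≠ 0)).card : ℝ) := by
    rw [Finset.sum_congr rfl (fun k hk => ?_), Finset.sum_const, nsmul_eq_mul, mul_one]
    simp only [Finset.mem_filter] at hk
    rcases hb k with h | h
    · exact absurd h hk.2
    · exact h
  rw [hcard] at hs
  exact_mod_cast hs

lemma card0_eq_sum (x : Fin 9 → Fin 9 → Fin 9 → ℝ) :
    card0 x = ∑ p : Fin 9 × Fin 9,
      (univ.filter (fun k => x p.1 p.2 k ≠ 0)).card := by
  unfold card0
  simp only [Finset.card_filter, Fintype.sum_prod_type]

lemma N_all_one (x : Fin 9 → Fin 9 → Fin 9 → ℝ)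
    (hcell : ∀ i j, ∑ k, x i j k = 1) (h81 : card0 x = 81) :
    ∀ i j, (univ.filter (fun k => x i j k ≠ 0)).card = 1 := by
  have key := (Finset.sum_eq_sum_iff_of_le
      (f := fun _ : Fin 9 × Fin 9 => (1 : ℕ))
      (g := fun p : Fin 9 × Fin 9 => (univ.filter (fun k => x p.1 p.2 k ≠ 0)).card)
      (s := univ)
      (fun p _ => cell_one_le _ (hcell p.1 p.2))).mp
  intro i j
  have hsum : ∑ p : Fin 9 × Fin 9, (1 : ℕ)
      = ∑ p : Fin 9 × Fin 9, (univ.filter (fun k => x p.1 p.2 k ≠ 0)).card := by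
    rw [← card0_eq_sum, h81]; simp
  exact (key hsum (i, j) (mem_univ _)).symm

lemma part1 (x : Fin 9 → Fin 9 → Fin 9 → ℝ)
    (hcell : ∀ i j, ∑ k, x i j k = 1) :
    81 ≤ card0 x ∧ (card0 x = 81 ↔ Binary x) := by
  have hle : ∀ p : Fin 9 × Fin 9,
      1 ≤ (univ.filter (fun k => x p.1 p.2 k ≠ 0)).card :=
    fun p => cell_one_le _ (hcell p.1 p.2)
  constructor
  · rw [card0_eq_sum]
    calc (81 : ℕ) = ∑ _p : Fin 9 × Fin 9, 1 := by simp
    _ ≤ _ := Finset.sum_le_sum (fun p _ => hle p)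
  constructor
  · intro h81 i j k
    obtain ⟨k0, h1, h0⟩ := cell_card_one _ (hcell i j) (N_all_one x hcell h81 i j)
    by_cases hk : k = k0
    · right; rw [hk]; exact h1
    · left; exact h0 k hk
  · intro hb
    rw [card0_eq_sum]
    have : ∀ p : Fin 9 × Fin 9, (univ.filter (fun k => x p.1 p.2 k ≠ 0)).card = 1 :=
      fun p => cell_binary_card _ (hcell p.1 p.2) (fun k => hb p.1 p.2 k)
    simp [this]

lemma sum_if_of_bij {α : Type*} [Fintype α] {f : α → Fin 9}
    (hf : Function.Bijective f) (k : Fin 9) :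
    ∑ j, (if f j = k then (1 : ℝ) else 0) = 1 := by
  rw [Fintype.sum_bijective f hf _ (fun m => if m = k then (1 : ℝ) else 0)
    (fun j => rfl)]
  simp

/-- For any nonnegative feasible vector of the Sudoku system, `‖x‖₀ ≥ 81` with
equality iff `x` is binary; hence when the puzzle is solvable the ℓ₀ problem
over nonnegative feasible vectors has optimal value 81 and its optimizers are
exactly the encodings of valid Sudoku solutions. -/
theorem l0_minimizers_are_encodings (clues : Fin 9 → Fin 9 → Fin 9 → Prop) :
    (∀ x : Fin 9 → Fin 9 → Fin 9 → ℝ, (∀ i j k, 0 ≤ x i j k) →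
      SudokuSat clues x →
      81 ≤ card0 x ∧ (card0 x = 81 ↔ Binary x)) ∧
    ((∃ S, ValidSolution S ∧ Respects clues S) →
      (∃ x : Fin 9 → Fin 9 → Fin 9 → ℝ, (∀ i j k, 0 ≤ x i j k) ∧
        SudokuSat clues x ∧ card0 x = 81) ∧
      (∀ x : Fin 9 → Fin 9 → Fin 9 → ℝ, (∀ i j k, 0 ≤ x i j k) →
        SudokuSat clues x →
        (card0 x = 81 ↔
          ∃ S, ValidSolution S ∧ Respects clues S ∧ x = enc S))) := by
  -- SudokuSat of an encoding of a valid solution respecting the clues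
  have henc : ∀ S : Fin 9 → Fin 9 → Fin 9, ValidSolution S → Respects clues S →
      SudokuSat clues (enc S) := by
    intro S hS hR
    obtain ⟨hrow, hcol, hbox⟩ := hS
    refine ⟨fun i k => sum_if_of_bij (hrow i) k,
            fun j k => sum_if_of_bij (hcol j) k,
            ?_,
            fun i j => ?_,
            fun i j d hc => by simp [enc, hR i j d hc]⟩
    · intro p q k
      have hbij : Function.Bijective
          (fun st : Fin 3 × Fin 3 => S (boxIdx p st.1) (boxIdx q st.2)) :=
        (Fintype.bijective_iff_injective_and_card _).mpr ⟨hbox p q, by simp⟩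
      have := sum_if_of_bij hbij k
      rw [Fintype.sum_prod_type] at this
      exact this
    · have : ∑ k, enc S i j k = ∑ k, (if k = S i j then (1:ℝ) else 0) := by
        apply Finset.sum_congr rfl
        intro k _
        simp [enc, eq_comm]
      rw [this]
      simp
  have hbinenc : ∀ S : Fin 9 → Fin 9 → Fin 9, Binary (enc S) := by
    intro S i j k
    by_cases h : S i j = k <;> simp [enc, h]
  constructor
  · intro x _ hsat
    exact part1 x hsat.2.2.2.1
  · intro ⟨S0, hS0, hR0⟩
    have hsat0 := henc S0 hS0 hR0
    constructor
    · refine ⟨enc S0, fun i j k => by unfold enc; positivity, hsat0, ?_⟩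
      exact (part1 _ hsat0.2.2.2.1).2.mpr (hbinenc S0)
    · intro x hx hsat
      obtain ⟨hrow, hcol, hbox, hcell, hclue⟩ := hsat
      constructor
      · intro h81
        have huniq : ∀ i j, ∃ k, x i j k = 1 ∧ ∀ k', k' ≠ k → x i j k' = 0 :=
          fun i j => cell_card_one _ (hcell i j) (N_all_one x hcell h81 i j)
        choose S hS1 hS2 using huniq
        have hxenc : x = enc S := by
          funext i j k
          by_cases h : S i j = k
          · rw [← h]; simp [enc, hS1]
          · rw [hS2 i j k (fun hk => h hk.symm)]; simp [enc, h]
        refine ⟨S, ⟨?_, ?_, ?_⟩, ?_, hxenc⟩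
        · intro i
          rw [← Finite.injective_iff_bijective]
          intro j1 j2 hj
          exact sum_eq_one_unique (fun j => x i j (S i j1)) (fun j => hx i j _)
            (hrow i (S i j1)) (hS1 i j1) (by rw [hj]; exact hS1 i j2)
        · intro j
          rw [← Finite.injective_iff_bijective]
          intro i1 i2 hi
          exact sum_eq_one_unique (fun i => x i j (S i1 j)) (fun i => hx i j _)
            (hcol j (S i1 j)) (hS1 i1 j) (by simp only at hi; rw [hi]; exact hS1 i2 j)
        · intro p q
          intro st1 st2 hst
          simp only at hst
          have hsum : ∑ st : Fin 3 × Fin 3,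
              x (boxIdx p st.1) (boxIdx q st.2) (S (boxIdx p st1.1) (boxIdx q st1.2)) = 1 := by
            rw [Fintype.sum_prod_type]
            exact hbox p q _
          exact sum_eq_one_unique
            (fun st : Fin 3 × Fin 3 =>
              x (boxIdx p st.1) (boxIdx q st.2) (S (boxIdx p st1.1) (boxIdx q st1.2)))
            (fun st => hx _ _ _) hsum (hS1 _ _) (by rw [hst]; exact hS1 _ _)
        · intro i j d hc
          exact (sum_eq_one_unique (fun k => x i j k) (fun k => hx i j k)
            (hcell i j) (hS1 i j) (hclue i j d hc))
      · rintro ⟨S, _, _, rfl⟩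
        exact (part1 _ hcell).2.mpr (hbinenc S)
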